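/- arXiv:2312.02814 — 7 statements merged into one kernel-verified Lean document; each statement's English description precedes it below -/
import Mathlib

section
/- Let Φ : M_n(ℂ) → M_m(ℂ) be a positive linear map. Suppose there is a family of vectors x_i ∈ ℂⁿ and y_i ∈ ℂᵐ such that ⟨y_i, Φ(conj(x_i)·conj(x_i)†) y_i⟩ = 0 for every i, and the product vectors x_i ⊗ y_i span all of ℂⁿ ⊗ ℂᵐ. Then Φ is optimal. -/
open Matrix BigOperators
open scoped ComplexOrder

/-- A linear map between matrix algebras is positive if it maps positive semidefinite
matrices to positive semidefinite matrices. -/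
def IsPositiveMap {n m : ℕ}
    (Φ : Matrix (Fin n) (Fin n) ℂ →ₗ[ℂ] Matrix (Fin m) (Fin m) ℂ) : Prop :=
  ∀ X : Matrix (Fin n) (Fin n) ℂ, X.PosSemidef → (Φ X).PosSemidef

/-- The Choi matrix `∑ i j, E_{ij} ⊗ Ψ(E_{ij})` of a linear map between matrix algebras. -/
def ChoiMatrix {n m : ℕ}
    (Ψ : Matrix (Fin n) (Fin n) ℂ →ₗ[ℂ] Matrix (Fin m) (Fin m) ℂ) :
    Matrix (Fin n × Fin m) (Fin n × Fin m) ℂ :=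
  Matrix.of fun p q => Ψ (Matrix.single p.1 q.1 1) p.2 q.2

/-- A linear map between matrix algebras is completely positive if its Choi matrix is
positive semidefinite. -/
def IsCompletelyPositive {n m : ℕ}
    (Ψ : Matrix (Fin n) (Fin n) ℂ →ₗ[ℂ] Matrix (Fin m) (Fin m) ℂ) : Prop :=
  (ChoiMatrix Ψ).PosSemidef

/-- A positive map `Φ` is optimal if for every completely positive map `Ψ` such that
`Φ - Ψ` is positive, one has `Ψ = 0`. -/
def IsOptimal {n m : ℕ}
    (Φ : Matrix (Fin n) (Fin n) ℂ →ₗ[ℂ] Matrix (Fin m) (Fin m) ℂ) : Prop :=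
  ∀ Ψ : Matrix (Fin n) (Fin n) ℂ →ₗ[ℂ] Matrix (Fin m) (Fin m) ℂ,
    IsCompletelyPositive Ψ → IsPositiveMap (Φ - Ψ) → Ψ = 0

/-! If `Ψ` is completely positive and `Φ - Ψ` is positive, the quadratic form of the Choi matrix
of `Ψ` at `x i ⊗ y i` equals `⟪y i, Ψ (x̄ᵢ x̄ᵢᴴ) y i⟫`, which lies between `0` and
`⟪y i, Φ (x̄ᵢ x̄ᵢᴴ) y i⟫ = 0`. A positive semidefinite matrix whose quadratic form vanishes on a
spanning family is zero, and a linear map is determined by its Choi matrix, so `Ψ = 0`. -/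

theorem Matrix.PosSemidef.eq_zero_of_dotProduct_mulVec_eq_zero_of_span_eq_top
    {𝕜 ι κ : Type*} [RCLike 𝕜] [Fintype κ] [DecidableEq κ] {A : Matrix κ κ 𝕜}
    (hA : A.PosSemidef) {v : ι → κ → 𝕜} (hv : Submodule.span 𝕜 (Set.range v) = ⊤)
    (h : ∀ i, star (v i) ⬝ᵥ A *ᵥ v i = 0) : A = 0 := by
  have : A.mulVecLin = 0 :=
    LinearMap.ext_on_range hv fun i => (hA.dotProduct_mulVec_zero_iff (v i)).mp (h i)
  exact Matrix.toLin'.injective (by rwa [map_zero, Matrix.toLin'_apply'])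

theorem LinearMap.map_eq_sum_single {R β ι κ : Type*} [CommSemiring R] [AddCommMonoid β]
    [Module R β] [Fintype ι] [Fintype κ] [DecidableEq ι] [DecidableEq κ]
    (f : Matrix ι κ R →ₗ[R] β) (M : Matrix ι κ R) :
    f M = ∑ i, ∑ j, M i j • f (Matrix.single i j 1) := by
  conv_lhs => rw [matrix_eq_sum_single M]
  simp only [map_sum, ← map_smul, smul_single, smul_eq_mul, mul_one]

theorem map_eq_zero_of_choiMatrix_eq_zero {n m : ℕ}
    {Ψ : Matrix (Fin n) (Fin n) ℂ →ₗ[ℂ] Matrix (Fin m) (Fin m) ℂ} (h : ChoiMatrix Ψ = 0) :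
    Ψ = 0 := by
  ext M p q
  rw [Ψ.map_eq_sum_single]
  have hsingle : ∀ a b, Ψ (single a b 1) p q = 0 := fun a b => congrFun (congrFun h (a, p)) (b, q)
  simp [Matrix.sum_apply, hsingle]

theorem dotProduct_mulVec_choiMatrix {n m : ℕ}
    (Ψ : Matrix (Fin n) (Fin n) ℂ →ₗ[ℂ] Matrix (Fin m) (Fin m) ℂ)
    (x : Fin n → ℂ) (y : Fin m → ℂ) :
    star (fun p : Fin n × Fin m => x p.1 * y p.2) ⬝ᵥ
        ChoiMatrix Ψ *ᵥ (fun p : Fin n × Fin m => x p.1 * y p.2) =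
      star y ⬝ᵥ Ψ (vecMulVec (star x) x) *ᵥ y := by
  rw [Ψ.map_eq_sum_single]
  simp only [Matrix.sum_mulVec, dotProduct_sum, smul_mulVec, dotProduct_smul]
  simp only [dotProduct, mulVec, ChoiMatrix, of_apply, Pi.star_apply, star_mul', vecMulVec_apply,
    Fintype.sum_prod_type, Finset.mul_sum, smul_eq_mul]
  refine Finset.sum_congr rfl fun a _ => ?_
  rw [Finset.sum_comm]
  exact Finset.sum_congr rfl fun b _ => Finset.sum_congr rfl fun p _ =>
    Finset.sum_congr rfl fun q _ => by ring

theorem optimal_of_spanning_general {n m : ℕ}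
    (Φ : Matrix (Fin n) (Fin n) ℂ →ₗ[ℂ] Matrix (Fin m) (Fin m) ℂ)
    {ι : Type*} (x : ι → Fin n → ℂ) (y : ι → Fin m → ℂ)
    (hzero : ∀ i, star (y i) ⬝ᵥ (Φ (vecMulVec (star (x i)) (x i)) *ᵥ y i) = 0)
    (hspan : Submodule.span ℂ
      (Set.range fun i => fun p : Fin n × Fin m => x i p.1 * y i p.2) = ⊤) :
    IsOptimal Φ := by
  intro Ψ hΨ hΦΨ
  refine map_eq_zero_of_choiMatrix_eq_zero
    (hΨ.eq_zero_of_dotProduct_mulVec_eq_zero_of_span_eq_top hspan fun i => ?_)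
  have hdiff := (hΦΨ _ (posSemidef_vecMulVec_star_self (x i))).dotProduct_mulVec_nonneg (y i)
  rw [LinearMap.sub_apply, sub_mulVec, dotProduct_sub, hzero i, zero_sub, neg_nonneg,
    ← dotProduct_mulVec_choiMatrix] at hdiff
  exact le_antisymm hdiff (hΨ.dotProduct_mulVec_nonneg _)

/-- The spanning property implies optimality. -/
theorem optimal_of_spanning {n m : ℕ}
    (Φ : Matrix (Fin n) (Fin n) ℂ →ₗ[ℂ] Matrix (Fin m) (Fin m) ℂ)
    (hΦ : IsPositiveMap Φ) {ι : Type*} (x : ι → Fin n → ℂ) (y : ι → Fin m → ℂ)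
    (hzero : ∀ i, star (y i) ⬝ᵥ (Φ (vecMulVec (star (x i)) (x i)) *ᵥ y i) = 0)
    (hspan : Submodule.span ℂ
      (Set.range fun i => fun p : Fin n × Fin m => x i p.1 * y i p.2) = ⊤) :
    IsOptimal Φ :=
  optimal_of_spanning_general Φ x y hzero hspan
end

section
/- The map Φ_W is positive if and only if for every x = (x₁, x₂, x₃) with x_i ≥ 0 and x₁ + x₂ + x₃ = 1 and every nonempty subset I ⊆ {1,2,3}, one has M_I(x) := Π_{i∈I} z_i − Σ_{i∈I} x_i · Π_{j∈I∖{i}} z_j ≥ 0, where z_i = Σ_{j=1}^3 w_{ij} x_j and the empty product equals 1. -/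
open Matrix BigOperators
open scoped ComplexOrder

/-!
Every positive semidefinite `X` is a sum of rank-one matrices `a a*`, and
`Φ_W(a a*) = diag z - a a*` with `z = W |a|²`. Such a matrix is positive semidefinite iff
`|⟨a, u⟩|² ≤ ∑ z_i |u_i|²` for all `u`, and this holds iff all its principal minors `M_I` are
nonnegative: testing `u = a / z` on `I` gives one direction; for the other, the minor on the
support of `z` says `∑ |a_i|² / z_i ≤ 1`, and the weighted Cauchy–Schwarz inequality finishes.
Since `M_I` is homogeneous in `x`, it suffices to check it on the simplex.
-/

/-- The generalized Choi map `Φ_W(X) = D_W(X) - X`. -/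
noncomputable def PhiW (W : Matrix (Fin 3) (Fin 3) ℝ) (X : Matrix (Fin 3) (Fin 3) ℂ) :
    Matrix (Fin 3) (Fin 3) ℂ :=
  Matrix.diagonal (fun i => ∑ j, (W i j : ℂ) * X j j) - X

/-- `Φ_W` is a positive map. -/
def PhiWPos (W : Matrix (Fin 3) (Fin 3) ℝ) : Prop :=
  ∀ X : Matrix (Fin 3) (Fin 3) ℂ, X.PosSemidef → (PhiW W X).PosSemidef

section

variable {ι : Type*} [DecidableEq ι]

-- The principal minor on `I` of `diagonal z - vecMulVec √x √x` (matrix determinant lemma);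
-- with `z = W *ᵥ x` it is the paper's `M_I(x)`.
def rankOneMinor (z x : ι → ℝ) (I : Finset ι) : ℝ :=
  ∏ i ∈ I, z i - ∑ i ∈ I, x i * ∏ j ∈ I.erase i, z j

@[simp]
lemma rankOneMinor_singleton (z x : ι → ℝ) (i : ι) : rankOneMinor z x {i} = z i - x i := by
  simp [rankOneMinor]

lemma rankOneMinor_eq_prod_mul_one_sub {z : ι → ℝ} (x : ι → ℝ) {I : Finset ι}
    (hz : ∀ i ∈ I, z i ≠ 0) :
    rankOneMinor z x I = (∏ i ∈ I, z i) * (1 - ∑ i ∈ I, x i / z i) := by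
  rw [rankOneMinor, mul_one_sub, Finset.mul_sum]
  congr 1
  refine Finset.sum_congr rfl fun i hi => ?_
  rw [← Finset.prod_erase_mul I z hi]
  field_simp [hz i hi]

lemma rankOneMinor_smul (c : ℝ) (z x : ι → ℝ) (I : Finset ι) :
    rankOneMinor (c • z) (c • x) I = c ^ I.card * rankOneMinor z x I := by
  rw [rankOneMinor, rankOneMinor, mul_sub, Finset.mul_sum]
  simp only [Pi.smul_apply, smul_eq_mul, Finset.prod_mul_distrib, Finset.prod_const]
  congr 1
  refine Finset.sum_congr rfl fun i hi => ?_
  obtain ⟨k, hk⟩ := Nat.exists_eq_add_one_of_ne_zero (Finset.card_ne_zero_of_mem hi)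
  rw [Finset.card_erase_of_mem hi, hk, Nat.add_sub_cancel]
  ring

variable {𝕜 : Type*} [RCLike 𝕜] [Fintype ι] {z : ι → ℝ} {a : ι → 𝕜}

lemma norm_sq_le_of_forall_norm_dotProduct_sq_le
    (hq : ∀ u, ‖star a ⬝ᵥ u‖ ^ 2 ≤ ∑ i, z i * ‖u i‖ ^ 2) (i : ι) : ‖a i‖ ^ 2 ≤ z i := by
  simpa [dotProduct_single, Pi.single_apply, apply_ite] using hq (Pi.single i 1)

lemma rankOneMinor_nonneg_of_forall_norm_dotProduct_sq_le
    (hq : ∀ u, ‖star a ⬝ᵥ u‖ ^ 2 ≤ ∑ i, z i * ‖u i‖ ^ 2) (I : Finset ι) :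
    0 ≤ rankOneMinor z (fun i => ‖a i‖ ^ 2) I := by
  have hxz := norm_sq_le_of_forall_norm_dotProduct_sq_le hq
  by_cases hzI : ∃ i ∈ I, z i = 0
  · obtain ⟨i, hi, hzi⟩ := hzI
    have hai : ‖a i‖ ^ 2 = 0 := le_antisymm (hzi ▸ hxz i) (by positivity)
    have hterm : ∀ k ∈ I, ‖a k‖ ^ 2 * ∏ j ∈ I.erase k, z j = 0 := fun k _ => by
      rcases eq_or_ne k i with rfl | hki
      · rw [hai, zero_mul]
      · rw [Finset.prod_eq_zero (Finset.mem_erase.2 ⟨Ne.symm hki, hi⟩) hzi, mul_zero]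
    rw [rankOneMinor, Finset.prod_eq_zero hi hzi, Finset.sum_eq_zero hterm, sub_zero]
  push Not at hzI
  have hzpos : ∀ i ∈ I, 0 < z i := fun i hi =>
    lt_of_le_of_ne ((sq_nonneg _).trans (hxz i)) (hzI i hi).symm
  set t := ∑ i ∈ I, ‖a i‖ ^ 2 / z i
  have ht : t ^ 2 ≤ t := by
    set u : ι → 𝕜 := fun i => if i ∈ I then a i / (z i : 𝕜) else 0
    have hdot : star a ⬝ᵥ u = (t : 𝕜) := by
      simp only [u, t, dotProduct, Pi.star_apply, mul_ite, mul_zero, Finset.sum_ite_mem,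
        Finset.univ_inter, RCLike.ofReal_sum, RCLike.ofReal_div, RCLike.ofReal_pow]
      refine Finset.sum_congr rfl fun i _ => ?_
      rw [RCLike.star_def, ← mul_div_assoc, RCLike.conj_mul]
    have hnorm : ∑ i, z i * ‖u i‖ ^ 2 = t := by
      rw [← Finset.sum_subset I.subset_univ fun i _ hi => by simp [u, hi]]
      refine Finset.sum_congr rfl fun i hi => ?_
      rw [show u i = a i / z i from if_pos hi, norm_div, RCLike.norm_ofReal,
        abs_of_pos (hzpos i hi)]
      field_simp
    simpa [hdot, hnorm] using hq u
  rw [rankOneMinor_eq_prod_mul_one_sub _ hzI]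
  have : 0 ≤ t := Finset.sum_nonneg fun i hi => div_nonneg (sq_nonneg _) (hzpos i hi).le
  exact mul_nonneg (Finset.prod_nonneg fun i hi => (hzpos i hi).le) (by nlinarith)

lemma norm_dotProduct_sq_le_of_forall_rankOneMinor_nonneg
    (h : ∀ I, 0 ≤ rankOneMinor z (fun i => ‖a i‖ ^ 2) I) (u : ι → 𝕜) :
    ‖star a ⬝ᵥ u‖ ^ 2 ≤ ∑ i, z i * ‖u i‖ ^ 2 := by
  have hxz : ∀ i, ‖a i‖ ^ 2 ≤ z i := fun i => by simpa using h {i}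
  have hz : ∀ i, 0 ≤ z i := fun i => (sq_nonneg _).trans (hxz i)
  have hfrac : ∑ i, ‖a i‖ ^ 2 / z i ≤ 1 := by
    set T := Finset.univ.filter fun i => z i ≠ 0
    have hzT : ∀ i ∈ T, z i ≠ 0 := fun i hi => (Finset.mem_filter.1 hi).2
    have hT := h T
    rw [rankOneMinor_eq_prod_mul_one_sub _ hzT] at hT
    have hprod : 0 < ∏ i ∈ T, z i :=
      Finset.prod_pos fun i hi => lt_of_le_of_ne (hz i) (hzT i hi).symm
    have hsum : ∑ i ∈ T, ‖a i‖ ^ 2 / z i = ∑ i, ‖a i‖ ^ 2 / z i :=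
      Finset.sum_filter_of_ne fun i _ hi hzi => hi (by rw [hzi, div_zero])
    rw [← hsum]
    nlinarith
  calc ‖star a ⬝ᵥ u‖ ^ 2 ≤ (∑ i, ‖a i‖ * ‖u i‖) ^ 2 := by
        gcongr
        refine (norm_sum_le _ _).trans_eq (Finset.sum_congr rfl fun i _ => ?_)
        rw [Pi.star_apply, norm_mul, norm_star]
    _ ≤ (∑ i, ‖a i‖ ^ 2 / z i) * ∑ i, z i * ‖u i‖ ^ 2 := by
        refine Finset.sum_sq_le_sum_mul_sum_of_sq_le_mul _
          (fun i _ => div_nonneg (sq_nonneg _) (hz i))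
          (fun i _ => mul_nonneg (hz i) (sq_nonneg _)) fun i _ => ?_
        rcases (hz i).eq_or_lt with hzi | hzi
        · have : ‖a i‖ ^ 2 = 0 := le_antisymm (hzi ▸ hxz i) (sq_nonneg _)
          simp [mul_pow, this, ← hzi]
        · rw [mul_pow, div_mul_eq_mul_div, mul_left_comm, mul_div_cancel_left₀ _ hzi.ne']
    _ ≤ ∑ i, z i * ‖u i‖ ^ 2 :=
        mul_le_of_le_one_left (Finset.sum_nonneg fun i _ => mul_nonneg (hz i) (sq_nonneg _)) hfrac

lemma forall_norm_dotProduct_sq_le_iff :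
    (∀ u, ‖star a ⬝ᵥ u‖ ^ 2 ≤ ∑ i, z i * ‖u i‖ ^ 2) ↔
      ∀ I, 0 ≤ rankOneMinor z (fun i => ‖a i‖ ^ 2) I :=
  ⟨rankOneMinor_nonneg_of_forall_norm_dotProduct_sq_le,
    norm_dotProduct_sq_le_of_forall_rankOneMinor_nonneg⟩

lemma star_dotProduct_diagonal_sub_vecMulVec_mulVec (u : ι → 𝕜) :
    star u ⬝ᵥ ((diagonal (fun i => (z i : 𝕜)) - vecMulVec a (star a)) *ᵥ u) =
      ((∑ i, z i * ‖u i‖ ^ 2 - ‖star a ⬝ᵥ u‖ ^ 2 : ℝ) : 𝕜) := by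
  have hdiag :
      star u ⬝ᵥ (diagonal (fun i => (z i : 𝕜)) *ᵥ u) = ((∑ i, z i * ‖u i‖ ^ 2 : ℝ) : 𝕜) := by
    simp only [dotProduct, mulVec_diagonal, Pi.star_apply, RCLike.star_def, RCLike.ofReal_sum,
      RCLike.ofReal_mul, RCLike.ofReal_pow, ← RCLike.conj_mul]
    exact Finset.sum_congr rfl fun i _ => by ring
  have hrank : star u ⬝ᵥ (vecMulVec a (star a) *ᵥ u) = ((‖star a ⬝ᵥ u‖ ^ 2 : ℝ) : 𝕜) := by
    rw [vecMulVec_mulVec, dotProduct_smul, star_dotProduct, op_smul_eq_mul, RCLike.ofReal_pow,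
      ← RCLike.conj_mul, RCLike.star_def, RCLike.conj_conj]
  rw [sub_mulVec, dotProduct_sub, hdiag, hrank, RCLike.ofReal_sub]

lemma posSemidef_diagonal_sub_vecMulVec_iff :
    (diagonal (fun i => (z i : 𝕜)) - vecMulVec a (star a)).PosSemidef ↔
      ∀ I, 0 ≤ rankOneMinor z (fun i => ‖a i‖ ^ 2) I := by
  have hherm : (diagonal (fun i => (z i : 𝕜)) - vecMulVec a (star a)).IsHermitian :=
    (isHermitian_diagonal_of_self_adjoint _ (funext fun i => RCLike.conj_ofReal _)).sub
      (posSemidef_vecMulVec_self_star a).isHermitian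
  simp only [posSemidef_iff_dotProduct_mulVec, hherm, true_and,
    star_dotProduct_diagonal_sub_vecMulVec_mulVec, RCLike.ofReal_nonneg, sub_nonneg,
    forall_norm_dotProduct_sq_le_iff]

lemma rankOneMinor_mulVec_nonneg_of_sum_eq_one {W : Matrix ι ι ℝ}
    (h : ∀ y : ι → ℝ, (∀ i, 0 ≤ y i) → ∑ i, y i = 1 →
      ∀ I : Finset ι, I.Nonempty → 0 ≤ rankOneMinor (W *ᵥ y) y I)
    {x : ι → ℝ} (hx : ∀ i, 0 ≤ x i) (I : Finset ι) : 0 ≤ rankOneMinor (W *ᵥ x) x I := by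
  rcases I.eq_empty_or_nonempty with rfl | hI
  · simp [rankOneMinor]
  rcases (Fintype.sum_nonneg (f := x) hx).eq_or_lt with hs | hs
  · obtain rfl : x = 0 :=
      funext fun i => (Finset.sum_eq_zero_iff_of_nonneg fun i _ => hx i).1 hs.symm i (by simp)
    simp [rankOneMinor, hI.ne_empty]
  set s := ∑ i, x i
  have hsx : x = s • s⁻¹ • x := by rw [smul_smul, mul_inv_cancel₀ hs.ne', one_smul]
  rw [hsx, mulVec_smul, rankOneMinor_smul]
  refine mul_nonneg (pow_nonneg hs.le _) (h _ (fun i => ?_) ?_ I hI)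
  · exact smul_nonneg (inv_nonneg.2 hs.le) (hx i)
  · simp [← Finset.mul_sum, inv_mul_cancel₀ hs.ne', s]

end

lemma phiW_sum (W : Matrix (Fin 3) (Fin 3) ℝ) {κ : Type*} (s : Finset κ)
    (X : κ → Matrix (Fin 3) (Fin 3) ℂ) : PhiW W (∑ k ∈ s, X k) = ∑ k ∈ s, PhiW W (X k) := by
  simp only [PhiW, Finset.sum_sub_distrib, sub_left_inj]
  ext i j
  simp only [Matrix.sum_apply, diagonal_apply, Finset.mul_sum]
  split_ifs
  · exact Finset.sum_comm
  · simp

lemma phiW_vecMulVec (W : Matrix (Fin 3) (Fin 3) ℝ) (a : Fin 3 → ℂ) :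
    PhiW W (vecMulVec a (star a)) =
      diagonal (fun i => ((W *ᵥ fun j => ‖a j‖ ^ 2) i : ℂ)) - vecMulVec a (star a) := by
  simp [PhiW, vecMulVec_apply, mulVec, dotProduct, Complex.mul_conj']

lemma phiWPos_iff_forall_vecMulVec (W : Matrix (Fin 3) (Fin 3) ℝ) :
    PhiWPos W ↔ ∀ a : Fin 3 → ℂ, (PhiW W (vecMulVec a (star a))).PosSemidef := by
  refine ⟨fun h a => h _ (posSemidef_vecMulVec_self_star a), fun h X hX => ?_⟩
  obtain ⟨m, v, rfl⟩ := posSemidef_iff_eq_sum_vecMulVec.mp hX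
  rw [phiW_sum]
  exact posSemidef_sum _ fun k _ => h (v k)

lemma phiWPos_iff_forall_rankOneMinor_nonneg (W : Matrix (Fin 3) (Fin 3) ℝ) :
    PhiWPos W ↔ ∀ x : Fin 3 → ℝ, (∀ i, 0 ≤ x i) → ∀ I, 0 ≤ rankOneMinor (W *ᵥ x) x I := by
  have hPSD (a : Fin 3 → ℂ) : (PhiW W (vecMulVec a (star a))).PosSemidef ↔
      ∀ I, 0 ≤ rankOneMinor (W *ᵥ fun j => ‖a j‖ ^ 2) (fun j => ‖a j‖ ^ 2) I := by
    rw [phiW_vecMulVec]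
    exact posSemidef_diagonal_sub_vecMulVec_iff
  simp only [phiWPos_iff_forall_vecMulVec, hPSD]
  refine ⟨fun h x hx => ?_, fun h a => h _ fun i => sq_nonneg _⟩
  simpa [Real.sq_sqrt, hx, abs_of_nonneg] using h fun i => (√(x i) : ℂ)

theorem phiW_positive_iff_minors_general (W : Matrix (Fin 3) (Fin 3) ℝ) :
    PhiWPos W ↔
      ∀ x : Fin 3 → ℝ, (∀ i, 0 ≤ x i) → (∑ i, x i) = 1 →
        ∀ I : Finset (Fin 3), I.Nonempty →
          0 ≤ (∏ i ∈ I, ∑ j, W i j * x j) -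
                ∑ i ∈ I, x i * ∏ j ∈ I.erase i, (∑ k, W j k * x k) := by
  rw [phiWPos_iff_forall_rankOneMinor_nonneg]
  exact ⟨fun h x hx _ I _ => h x hx I,
    fun h _ hx I => rankOneMinor_mulVec_nonneg_of_sum_eq_one h hx I⟩

/-- `Φ_W` is positive iff all quantities `M_I(x)` are nonnegative for `x` in the
2-simplex and `I` a nonempty subset of `{1,2,3}`. -/
theorem phiW_positive_iff_minors (W : Matrix (Fin 3) (Fin 3) ℝ) (hW : ∀ i j, 0 ≤ W i j) :
    PhiWPos W ↔
      ∀ x : Fin 3 → ℝ, (∀ i, 0 ≤ x i) → (∑ i, x i) = 1 →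
        ∀ I : Finset (Fin 3), I.Nonempty →
          0 ≤ (∏ i ∈ I, ∑ j, W i j * x j) -
                ∑ i ∈ I, x i * ∏ j ∈ I.erase i, (∑ k, W j k * x k) :=
  phiW_positive_iff_minors_general W
end

section
/- Let W be a 3×3 real matrix whose three row sums and three column sums are all equal to a common value w. Then there exist unique real numbers a, b, c, d, e, f with d + e + f = 0 (gauge condition) such that W = [[a+f, b+d, c+e], [c+d, a+e, b+f], [b+e, c+f, a+d]]; moreover a + b + c = w and Tr W = 3a. -/
open Matrix BigOperators

/-- The parametrization of a 3×3 matrix by the parameters `a, b, c, d, e, f`. -/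
def Wparam (a b c d e f : ℝ) : Matrix (Fin 3) (Fin 3) ℝ :=
  !![a + f, b + d, c + e; c + d, a + e, b + f; b + e, c + f, a + d]

/-- Every 3×3 matrix with all row and column sums equal to `w` admits a unique
parametrization `W = Wparam a b c d e f` with the gauge condition `d + e + f = 0`;
moreover `a + b + c = w` and `Tr W = 3a`. -/
theorem exists_unique_param (W : Matrix (Fin 3) (Fin 3) ℝ) (w : ℝ)
    (hrow : ∀ i, ∑ j, W i j = w) (hcol : ∀ j, ∑ i, W i j = w) :
    (∃! p : ℝ × ℝ × ℝ × ℝ × ℝ × ℝ,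
      p.2.2.2.1 + p.2.2.2.2.1 + p.2.2.2.2.2 = 0 ∧
      W = Wparam p.1 p.2.1 p.2.2.1 p.2.2.2.1 p.2.2.2.2.1 p.2.2.2.2.2) ∧
    (∀ a b c d e f : ℝ, d + e + f = 0 → W = Wparam a b c d e f →
      a + b + c = w ∧ Matrix.trace W = 3 * a) := by
  have h0 := hrow 0; have h1 := hrow 1; have h2 := hrow 2
  have k0 := hcol 0; have k1 := hcol 1; have k2 := hcol 2
  simp [Fin.sum_univ_three] at h0 h1 h2 k0 k1 k2
  constructor
  · set a : ℝ := (W 0 0 + W 1 1 + W 2 2) / 3 with ha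
    refine ⟨⟨a, W 0 1 - (W 2 2 - a), W 0 2 - (W 1 1 - a),
        W 2 2 - a, W 1 1 - a, W 0 0 - a⟩, ⟨by dsimp only; linarith [ha], ?_⟩, ?_⟩
    · ext i j
      fin_cases i <;> fin_cases j <;>
        simp [Wparam, Matrix.cons_val_zero, Matrix.cons_val_one] <;> linarith [ha]
    · rintro ⟨a', b', c', d', e', f'⟩ ⟨hg, hW⟩
      have e00 := congrFun (congrFun hW 0) 0
      have e01 := congrFun (congrFun hW 0) 1
      have e02 := congrFun (congrFun hW 0) 2
      have e11 := congrFun (congrFun hW 1) 1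
      have e22 := congrFun (congrFun hW 2) 2
      simp [Wparam] at e00 e01 e02 e11 e22 hg
      refine Prod.ext ?_ (Prod.ext ?_ (Prod.ext ?_ (Prod.ext ?_ (Prod.ext ?_ ?_)))) <;>
        dsimp only <;> linarith [ha]
  · intro a b c d e f hg hW
    have e00 := congrFun (congrFun hW 0) 0
    have e01 := congrFun (congrFun hW 0) 1
    have e02 := congrFun (congrFun hW 0) 2
    have e11 := congrFun (congrFun hW 1) 1
    have e22 := congrFun (congrFun hW 2) 2
    simp [Wparam] at e00 e01 e02 e11 e22
    constructor
    · linarith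
    · simp [Matrix.trace, Matrix.diag, Fin.sum_univ_three]
      linarith
end

section
/- In ℂ³ ⊗ ℂ³ with standard basis vectors e_i ⊗ e_j, the linear span of the set { conj(ψ) ⊗ ψ : ψ ∈ ℂ³ with |ψ₁| = |ψ₂| = |ψ₃| = 1 } equals the orthogonal complement of span{ e₁⊗e₁ − e₂⊗e₂, e₂⊗e₂ − e₃⊗e₃ }; in particular this span is 7-dimensional. -/
/-!
Write `g ψ = conj ψ ⊗ ψ`. If `ψ` has unimodular entries, every diagonal entry `|ψ_i|²` of `g ψ`
is `1`, so the span lies in the subspace of vectors with constant diagonal, which is the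
orthogonal complement of `span {e₁⊗e₁ - e₂⊗e₂, e₂⊗e₂ - e₃⊗e₃}`.

Conversely, replacing `ψ_l` by a phase `ω` turns `g ψ` into `A + ω B + ω̄ C`, where `B` is the
`l`-th column of `g ψ` off the diagonal; sampling at `ω = ±1, ±i` extracts `B`. Comparing these
columns for `ψ = (1, …, 1)` and for `ψ` with its `k`-th entry flipped to `-1` gives every
off-diagonal `e_k ⊗ e_l`, and together with `g (1, …, 1)` they span the constant-diagonal vectors.
-/

namespace EuclideanSpace

variable {ι : Type*}

noncomputable def conjTensorSelf (ψ : ι → ℂ) : EuclideanSpace ℂ (ι × ι) :=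
  WithLp.toLp 2 fun p => star (ψ p.1) * ψ p.2

@[simp]
theorem conjTensorSelf_apply (ψ : ι → ℂ) (p : ι × ι) :
    conjTensorSelf ψ p = star (ψ p.1) * ψ p.2 := rfl

variable (ι) in
abbrev unimodularConjTensors : Set (EuclideanSpace ℂ (ι × ι)) :=
  conjTensorSelf '' {ψ | ∀ i, ‖ψ i‖ = 1}

variable (ι) in
def constDiagonal : Submodule ℂ (EuclideanSpace ℂ (ι × ι)) where
  carrier := {v | ∀ i j, v (i, i) = v (j, j)}
  add_mem' {v w} hv hw i j := by simp [hv i j, hw i j]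
  zero_mem' _ _ := rfl
  smul_mem' c v hv i j := by simp [hv i j]

theorem span_unimodularConjTensors_le :
    Submodule.span ℂ (unimodularConjTensors ι) ≤ constDiagonal ι := by
  rw [Submodule.span_le]
  rintro _ ⟨ψ, hψ, rfl⟩ i j
  simp [Complex.conj_mul', hψ i, hψ j]

variable [DecidableEq ι]

noncomputable def offDiagColumn (u : ι → ℂ) (l : ι) :
    EuclideanSpace ℂ (ι × ι) :=
  WithLp.toLp 2 fun p => if p.2 = l ∧ p.1 ≠ l then star (u p.1) else 0

theorem conjTensorSelf_update_fourier (u : ι → ℂ) (l : ι) :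
    (4 : ℂ)⁻¹ • (conjTensorSelf (Function.update u l 1) - conjTensorSelf (Function.update u l (-1))
      - Complex.I • (conjTensorSelf (Function.update u l Complex.I)
        - conjTensorSelf (Function.update u l (-Complex.I)))) = offDiagColumn u l := by
  ext ⟨i, j⟩
  by_cases hi : i = l <;> by_cases hj : j = l <;>
    simp [offDiagColumn, hi, hj] <;> ring_nf <;> simp [Complex.I_sq]; ring

theorem offDiagColumn_mem_span_unimodularConjTensors {u : ι → ℂ} (hu : ∀ i, ‖u i‖ = 1) (l : ι) :
    offDiagColumn u l ∈ Submodule.span ℂ (unimodularConjTensors ι) := by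
  have hmem : ∀ ω : ℂ, ‖ω‖ = 1 →
      conjTensorSelf (Function.update u l ω) ∈ Submodule.span ℂ (unimodularConjTensors ι) := by
    intro ω hω
    refine Submodule.subset_span ⟨_, fun i => ?_, rfl⟩
    rcases eq_or_ne i l with rfl | hi
    · simpa using hω
    · simpa [hi] using hu i
  rw [← conjTensorSelf_update_fourier]
  refine Submodule.smul_mem _ _ (Submodule.sub_mem _ (Submodule.sub_mem _ ?_ ?_)
    (Submodule.smul_mem _ _ (Submodule.sub_mem _ ?_ ?_))) <;> apply hmem <;> simp

theorem single_mem_span_unimodularConjTensors {k l : ι} (hkl : k ≠ l) :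
    single (k, l) (1 : ℂ) ∈ Submodule.span ℂ (unimodularConjTensors ι) := by
  have hones : ∀ i, ‖(1 : ι → ℂ) i‖ = 1 := by simp
  have hflip : ∀ i, ‖Function.update (1 : ι → ℂ) k (-1) i‖ = 1 := by
    intro i
    rcases eq_or_ne i k with rfl | hi <;> simp [*]
  have hdiff : single (k, l) (1 : ℂ) =
      (2 : ℂ)⁻¹ • (offDiagColumn 1 l - offDiagColumn (Function.update 1 k (-1)) l) := by
    ext ⟨i, j⟩
    rcases eq_or_ne i k with rfl | hi
    · by_cases hj : j = l <;> simp [offDiagColumn, hj, hkl]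
      norm_num
    · simp [offDiagColumn, hi, Function.update_apply]
  rw [hdiff]
  exact Submodule.smul_mem _ _
    (Submodule.sub_mem _ (offDiagColumn_mem_span_unimodularConjTensors hones l) (offDiagColumn_mem_span_unimodularConjTensors hflip l))

variable [Fintype ι]

theorem offDiag_mem_span_unimodularConjTensors {v : EuclideanSpace ℂ (ι × ι)}
    (hv : ∀ i, v (i, i) = 0) : v ∈ Submodule.span ℂ (unimodularConjTensors ι) := by
  rw [← (basisFun (ι × ι) ℂ).sum_repr v]
  refine Submodule.sum_mem _ fun ⟨k, l⟩ _ => ?_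
  rcases eq_or_ne k l with rfl | hkl
  · simp [hv]
  · simpa using Submodule.smul_mem _ (v (k, l)) (single_mem_span_unimodularConjTensors hkl)

theorem span_unimodularConjTensors :
    Submodule.span ℂ (unimodularConjTensors ι) = constDiagonal ι := by
  refine le_antisymm span_unimodularConjTensors_le fun v hv => ?_
  cases isEmpty_or_nonempty ι
  · simp [Subsingleton.elim v 0]
  obtain ⟨i₀⟩ := ‹Nonempty ι›
  have hones : conjTensorSelf 1 ∈ Submodule.span ℂ (unimodularConjTensors ι) :=
    Submodule.subset_span ⟨1, by simp, rfl⟩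
  have hoff : v - v (i₀, i₀) • conjTensorSelf 1 ∈ Submodule.span ℂ (unimodularConjTensors ι) :=
    offDiag_mem_span_unimodularConjTensors fun i => by simp [hv i i₀]
  simpa using Submodule.add_mem _ hoff (Submodule.smul_mem _ (v (i₀, i₀)) hones)

end EuclideanSpace

open EuclideanSpace

theorem orthogonal_span_diagonal_differences :
    (Submodule.span ℂ
      {(single ((0 : Fin 3), (0 : Fin 3)) (1 : ℂ) - single (1, 1) 1),
       (single ((1 : Fin 3), (1 : Fin 3)) (1 : ℂ) - single (2, 2) 1)})ᗮ =
      constDiagonal (Fin 3) := by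
  ext v
  simp only [Submodule.span_insert, ← Submodule.inf_orthogonal, Submodule.mem_inf,
    Submodule.mem_orthogonal_singleton_iff_inner_right, inner_sub_left, inner_single_left,
    map_one, one_mul, sub_eq_zero]
  refine ⟨fun ⟨h₀₁, h₁₂⟩ i j => ?_, fun h => ⟨h 0 1, h 1 2⟩⟩
  fin_cases i <;> fin_cases j <;> simp [h₀₁, h₁₂]

theorem finrank_span_diagonal_differences :
    Module.finrank ℂ (Submodule.span ℂ
      {(single ((0 : Fin 3), (0 : Fin 3)) (1 : ℂ) - single (1, 1) 1),
       (single ((1 : Fin 3), (1 : Fin 3)) (1 : ℂ) - single (2, 2) 1)}) = 2 := by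
  rw [← Matrix.range_cons_cons_empty, finrank_span_eq_card, Fintype.card_fin]
  refine LinearIndependent.pair_iff.2 fun s t hst => ⟨?_, ?_⟩
  · simpa using congrArg (· ((0 : Fin 3), (0 : Fin 3))) hst
  · simpa using congrArg (· ((2 : Fin 3), (2 : Fin 3))) hst

theorem finrank_constDiagonal_fin_three : Module.finrank ℂ (constDiagonal (Fin 3)) = 7 := by
  have hsum := Submodule.finrank_add_finrank_orthogonal (Submodule.span ℂ
    {(single ((0 : Fin 3), (0 : Fin 3)) (1 : ℂ) - single (1, 1) 1),
     (single ((1 : Fin 3), (1 : Fin 3)) (1 : ℂ) - single (2, 2) 1)})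
  rw [finrank_span_diagonal_differences, orthogonal_span_diagonal_differences,
    finrank_euclideanSpace, Fintype.card_prod, Fintype.card_fin] at hsum
  omega

/-- In `ℂ³ ⊗ ℂ³` (realized as `EuclideanSpace ℂ (Fin 3 × Fin 3)`, with `ψ ⊗ φ`
the vector `(i,j) ↦ ψ i * φ j`), the span of the vectors `conj(ψ) ⊗ ψ` over all `ψ`
with unimodular entries equals the orthogonal complement of
`span {e₁⊗e₁ - e₂⊗e₂, e₂⊗e₂ - e₃⊗e₃}`; in particular it is 7-dimensional. -/
theorem span_unimodular_vectors (S : Set (EuclideanSpace ℂ (Fin 3 × Fin 3)))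
    (hS : S = { v | ∃ ψ : Fin 3 → ℂ, (∀ i, ‖ψ i‖ = 1) ∧
      ∀ p : Fin 3 × Fin 3, v p = star (ψ p.1) * ψ p.2 }) :
    Submodule.span ℂ S =
        (Submodule.span ℂ
          {(EuclideanSpace.single ((0 : Fin 3), (0 : Fin 3)) (1 : ℂ) -
              EuclideanSpace.single (1, 1) 1),
           (EuclideanSpace.single ((1 : Fin 3), (1 : Fin 3)) (1 : ℂ) -
              EuclideanSpace.single (2, 2) 1)})ᗮ ∧
      Module.finrank ℂ (Submodule.span ℂ S) = 7 := by
  have hS' : S = unimodularConjTensors (Fin 3) := by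
    subst hS
    ext v
    refine exists_congr fun ψ => and_congr_right fun _ => ?_
    simp [PiLp.ext_iff, eq_comm]
  rw [hS', span_unimodularConjTensors, orthogonal_span_diagonal_differences]
  exact ⟨rfl, finrank_constDiagonal_fin_three⟩
end

section
/- Let b = c ≥ 0, a = 3 − 2b with a ≥ 1, and let d, e, f be real numbers with d + e + f = 0 such that a+d ≥ 1, a+e ≥ 1, a+f ≥ 1 and b+d ≥ 0, b+e ≥ 0, b+f ≥ 0. Then the three edge conditions √((a+f−1)(a+e−1)) + √((b+d)(c+d)) ≥ 1, √((a+d−1)(a+f−1)) + √((b+e)(c+e)) ≥ 1, and √((a+e−1)(a+d−1)) + √((b+f)(c+f)) ≥ 1 hold simultaneously if and only if d² + e² + f² ≤ (3/2)(a−1)² = 6(b−1)². -/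
/-- For `b = c ≥ 0`, `a = 3 - 2b ≥ 1`, and `d + e + f = 0` with all relevant entries
admissible, the three edge conditions hold simultaneously iff
`d² + e² + f² ≤ (3/2)(a-1)² = 6(b-1)²`. -/
theorem edge_conditions_same_shape (a b c d e f : ℝ) (hbc : b = c) (ha : a = 3 - 2 * b)
    (ha1 : 1 ≤ a) (hgauge : d + e + f = 0)
    (had : 1 ≤ a + d) (hae : 1 ≤ a + e) (haf : 1 ≤ a + f)
    (hbd : 0 ≤ b + d) (hbe : 0 ≤ b + e) (hbf : 0 ≤ b + f) :
    ((1 ≤ Real.sqrt ((a + f - 1) * (a + e - 1)) + Real.sqrt ((b + d) * (c + d)) ∧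
      1 ≤ Real.sqrt ((a + d - 1) * (a + f - 1)) + Real.sqrt ((b + e) * (c + e)) ∧
      1 ≤ Real.sqrt ((a + e - 1) * (a + d - 1)) + Real.sqrt ((b + f) * (c + f))) ↔
        d ^ 2 + e ^ 2 + f ^ 2 ≤ 3 / 2 * (a - 1) ^ 2) ∧
      3 / 2 * (a - 1) ^ 2 = 6 * (b - 1) ^ 2 := by
  subst hbc
  subst ha
  have hL : ∀ t u : ℝ, 0 ≤ u → (t ≤ Real.sqrt u ↔ t ≤ 0 ∨ t ^ 2 ≤ u) := by
    intro t u hu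
    constructor
    · intro h
      rcases le_or_gt t 0 with ht | ht
      · exact Or.inl ht
      · right
        have h2 := Real.sq_sqrt hu
        nlinarith [Real.sqrt_nonneg u]
    · rintro (h | h)
      · exact h.trans (Real.sqrt_nonneg u)
      · exact Real.le_sqrt_of_sq_le h
  rw [Real.sqrt_mul_self hbd, Real.sqrt_mul_self hbe, Real.sqrt_mul_self hbf]
  set A : ℝ := 3 - 2 * b with hA
  have e1 : (1 ≤ Real.sqrt ((A + f - 1) * (A + e - 1)) + (b + d)) ↔
      (1 - (b + d) ≤ 0 ∨ (1 - (b + d)) ^ 2 ≤ (A + f - 1) * (A + e - 1)) := by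
    rw [← hL _ _ (mul_nonneg (by linarith) (by linarith))]
    constructor <;> intro <;> linarith
  have e2 : (1 ≤ Real.sqrt ((A + d - 1) * (A + f - 1)) + (b + e)) ↔
      (1 - (b + e) ≤ 0 ∨ (1 - (b + e)) ^ 2 ≤ (A + d - 1) * (A + f - 1)) := by
    rw [← hL _ _ (mul_nonneg (by linarith) (by linarith))]
    constructor <;> intro <;> linarith
  have e3 : (1 ≤ Real.sqrt ((A + e - 1) * (A + d - 1)) + (b + f)) ↔
      (1 - (b + f) ≤ 0 ∨ (1 - (b + f)) ^ 2 ≤ (A + e - 1) * (A + d - 1)) := by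
    rw [← hL _ _ (mul_nonneg (by linarith) (by linarith))]
    constructor <;> intro <;> linarith
  refine ⟨?_, by ring⟩
  rw [e1, e2, e3]
  have hf' : f = -d - e := by linarith
  subst hf'
  constructor
  · rintro ⟨h1 | h1, h2 | h2, h3 | h3⟩
    · -- all left: forces b = 1 and d = e = f = 0
      have hb1 : b ≤ 1 := by simp only [hA] at ha1; linarith
      have hd0 : d = 0 := by linarith
      have he0 : e = 0 := by linarith
      rw [hd0, he0]
      simp only [hA]
      nlinarith [sq_nonneg (1 - b)]
    · simp only [hA] at h3 ⊢; nlinarith [h3]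
    · simp only [hA] at h2 ⊢; nlinarith [h2]
    · simp only [hA] at h2 ⊢; nlinarith [h2]
    · simp only [hA] at h1 ⊢; nlinarith [h1]
    · simp only [hA] at h1 ⊢; nlinarith [h1]
    · simp only [hA] at h1 ⊢; nlinarith [h1]
    · simp only [hA] at h1 ⊢; nlinarith [h1]
  · intro h
    simp only [hA] at h
    refine ⟨Or.inr ?_, Or.inr ?_, Or.inr ?_⟩ <;> simp only [hA] <;> nlinarith [h]
end

section
/- Let 1 < a ≤ 3, set b = c = (3−a)/2 and μ = min{a−1, b}. Then every triple of real numbers (d, e, f) with d + e + f = 0 and d² + e² + f² ≤ (3/2)(a−1)² satisfies d ≥ −μ, e ≥ −μ and f ≥ −μ if and only if a ≤ 5/3. -/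
/-- For `1 < a ≤ 3`, `b = c = (3-a)/2` and `μ = min{a-1, b}`, the circle
`{(d,e,f) : d+e+f = 0, d²+e²+f² ≤ (3/2)(a-1)²}` is contained in the triangle
`{(d,e,f) : d,e,f ≥ -μ}` if and only if `a ≤ 5/3`. -/
theorem circle_in_triangle_iff (a b μ : ℝ) (ha1 : 1 < a) (ha3 : a ≤ 3)
    (hb : b = (3 - a) / 2) (hμ : μ = min (a - 1) b) :
    (∀ d e f : ℝ, d + e + f = 0 → d ^ 2 + e ^ 2 + f ^ 2 ≤ 3 / 2 * (a - 1) ^ 2 →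
        (-μ ≤ d ∧ -μ ≤ e ∧ -μ ≤ f)) ↔ a ≤ 5 / 3 := by
  constructor
  · intro h
    by_contra hlt
    push_neg at hlt
    obtain ⟨-, -, hf⟩ := h ((a - 1) / 2) ((a - 1) / 2) (-(a - 1)) (by ring) (by nlinarith)
    have hμb : μ ≤ b := hμ ▸ min_le_right _ _
    nlinarith
  · intro ha d e f hsum hsq
    have hμa : μ = a - 1 := by
      rw [hμ, min_eq_left]
      nlinarith
    subst hμa
    refine ⟨?_, ?_, ?_⟩ <;> nlinarith [sq_nonneg (e - f), sq_nonneg (d - f), sq_nonneg (d - e),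
      sq_nonneg (d + a - 1), sq_nonneg (e + a - 1), sq_nonneg (f + a - 1)]
end

section
/- Let n ≥ 1 and let ψ ∈ ℂⁿ have all entries nonzero. For θ = (θ₁, …, θₙ) ∈ ℝⁿ let ψ_θ ∈ ℂⁿ be the vector with entries (ψ_θ)_k = e^{iθ_k} ψ_k. Then the linear span in ℂⁿ ⊗ ℂⁿ of the set { ψ_θ ⊗ conj(ψ_θ) : θ ∈ ℝⁿ } has dimension n² − n + 1; explicitly, it equals span{ e_k ⊗ e_l : k ≠ l } ⊕ ℂ·(Σ_k |ψ_k|² e_k ⊗ e_k). -/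
/-!
Entrywise, `ψ_θ ⊗ conj ψ_θ = χ_θ · (ψ ⊗ conj ψ)` with `χ_θ(k, l) = e^{i(θ_k - θ_l)}`. The
characters `χ_θ` form a multiplicative monoid, so their span is a subalgebra of the functions on
pairs. For `k ≠ l` they separate `(k, l)` from every other pair, so Lagrange interpolation puts the
indicator `e_k ⊗ e_l` into this subalgebra; multiplying by `ψ ⊗ conj ψ`, whose entries are nonzero,
puts it into the span of the `ψ_θ ⊗ conj ψ_θ`. All these vectors have the same diagonal
`(|ψ_k|²)_k`, which gives the description of the span, and its dimension is `(n² - n) + 1`.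
-/

open Complex Finset
open scoped Real

section Interpolation

variable {ι K : Type*} [Fintype ι] [DecidableEq ι] [Field K]

theorem Subalgebra.single_one_mem_of_separates (A : Subalgebra K (ι → K)) (p : ι)
    (h : ∀ q ≠ p, ∃ f ∈ A, f q ≠ f p) : Pi.single p 1 ∈ A := by
  choose! f hfA hf using h
  -- Lagrange interpolation: the `q`-th factor is `1` at `p` and vanishes at `q`.
  have hprod :
      ∏ q ∈ univ.erase p, (f q q - f q p)⁻¹ • (algebraMap K (ι → K) (f q q) - f q) =
        Pi.single p 1 := by
    ext x
    simp only [Finset.prod_apply, Pi.smul_apply, Pi.sub_apply, Pi.algebraMap_apply,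
      Algebra.algebraMap_self, RingHom.id_apply, smul_eq_mul]
    by_cases hx : x = p
    · subst hx
      rw [Pi.single_eq_same]
      refine prod_eq_one fun q hq => inv_mul_cancel₀ ?_
      exact sub_ne_zero.2 (hf q (ne_of_mem_erase hq))
    · rw [Pi.single_eq_of_ne hx]
      exact prod_eq_zero (mem_erase.2 ⟨hx, mem_univ x⟩) (by rw [sub_self, mul_zero])
  rw [← hprod]
  exact A.prod_mem fun q hq =>
    A.smul_mem (A.sub_mem (A.algebraMap_mem _) (hfA q (ne_of_mem_erase hq))) _

end Interpolation

section Phases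

variable {ι : Type*}

noncomputable def phaseCharacter : Multiplicative (ι → ℝ) →* (ι × ι → ℂ) where
  toFun θ p := exp (((θ.toAdd p.1 - θ.toAdd p.2 : ℝ) : ℂ) * I)
  map_one' := by ext; simp
  map_mul' θ φ := by
    ext p
    simp only [toAdd_mul, Pi.add_apply, Pi.mul_apply, ← exp_add]
    push_cast
    ring_nf

lemma phaseCharacter_apply (θ : ι → ℝ) (p : ι × ι) :
    phaseCharacter (.ofAdd θ) p = exp (((θ p.1 - θ p.2 : ℝ) : ℂ) * I) := rfl

def tensorConj (x : ι → ℂ) : ι × ι → ℂ := fun p => x p.1 * star (x p.2)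

lemma tensorConj_apply_self (x : ι → ℂ) (a : ι) :
    tensorConj x (a, a) = ((‖x a‖ ^ 2 : ℝ) : ℂ) := by
  rw [tensorConj, Complex.star_def, mul_conj, normSq_eq_norm_sq]

lemma tensorConj_phaseShift (θ : ι → ℝ) (x : ι → ℂ) :
    tensorConj (fun k => exp (θ k * I) * x k) = phaseCharacter (.ofAdd θ) * tensorConj x := by
  ext p
  simp only [tensorConj, phaseCharacter_apply, Pi.mul_apply, star_mul', Complex.star_def,
    ← exp_conj, map_mul, conj_ofReal, conj_I]
  rw [mul_mul_mul_comm, ← exp_add]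
  push_cast
  ring_nf

lemma phaseCharacter_separates [DecidableEq ι] {k l : ι} (hkl : k ≠ l) (q : ι × ι)
    (hq : q ≠ (k, l)) : ∃ θ, phaseCharacter θ q ≠ phaseCharacter θ (k, l) := by
  obtain ⟨a, b⟩ := q
  -- the chosen character is `I` at `(k, l)` and `1` or `-I` at `(a, b)`
  by_cases ha : a = k
  · subst ha
    have hb : b ≠ l := fun h => hq (by rw [h])
    refine ⟨.ofAdd (Pi.single l (-(π / 2))), ?_⟩
    simp [phaseCharacter_apply, hb, hkl, Complex.ext_iff]
  · refine ⟨.ofAdd (Pi.single k (π / 2)), ?_⟩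
    rcases eq_or_ne b k with rfl | hb
    · norm_num [phaseCharacter_apply, ha, hkl.symm, Complex.ext_iff, exp_re, exp_im]
    · simp [phaseCharacter_apply, ha, hb, hkl.symm, Complex.ext_iff]

lemma single_offDiag_mem_span_phaseCharacter [Fintype ι] [DecidableEq ι] {k l : ι}
    (hkl : k ≠ l) :
    Pi.single (k, l) 1 ∈ Submodule.span ℂ (Set.range (phaseCharacter (ι := ι))) := by
  have h := (Algebra.adjoin ℂ (Set.range (phaseCharacter (ι := ι)))).single_one_mem_of_separates
    (k, l) fun q hq => by
      obtain ⟨θ, hθ⟩ := phaseCharacter_separates hkl q hq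
      exact ⟨_, Algebra.subset_adjoin ⟨θ, rfl⟩, hθ⟩
  rwa [← Subalgebra.mem_toSubmodule, Algebra.adjoin_eq_span, ← MonoidHom.coe_mrange,
    Submonoid.closure_eq] at h

lemma single_offDiag_mem_span_tensorConj_phaseShift [Fintype ι] [DecidableEq ι] (x : ι → ℂ)
    (hx : ∀ k, x k ≠ 0) {k l : ι} (hkl : k ≠ l) :
    Pi.single (k, l) 1 ∈
      Submodule.span ℂ
        (Set.range fun θ : ι → ℝ => tensorConj (fun k => exp (θ k * I) * x k)) := by
  have hrange : (Set.range fun θ : ι → ℝ => tensorConj (fun k => exp (θ k * I) * x k)) =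
      LinearMap.mulRight ℂ (tensorConj x) '' Set.range phaseCharacter := by
    rw [← Set.range_comp, ← Multiplicative.ofAdd.surjective.range_comp]
    simp only [Function.comp_def, LinearMap.mulRight_apply, tensorConj_phaseShift]
  have h := Submodule.apply_mem_span_image_of_mem_span (LinearMap.mulRight ℂ (tensorConj x))
    (single_offDiag_mem_span_phaseCharacter hkl)
  rw [← hrange, LinearMap.mulRight_apply, ← Pi.single_mul_left, one_mul] at h
  have hxkl : tensorConj x (k, l) ≠ 0 := mul_ne_zero (hx k) (star_ne_zero.2 (hx l))
  simpa [← Pi.single_smul, hxkl] using Submodule.smul_mem _ (tensorConj x (k, l))⁻¹ h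

end Phases

section OffDiagonal

variable {ι : Type*} [DecidableEq ι]

def offDiagSingles (ι R : Type*) [DecidableEq ι] [Zero R] [One R] : Set (ι × ι → R) :=
  {u | ∃ k l : ι, k ≠ l ∧ u = Pi.single (k, l) 1}

lemma mem_span_offDiagSingles_of_diag_eq_zero [Fintype ι] {R : Type*} [Semiring R]
    {u : ι × ι → R} (hu : ∀ a, u (a, a) = 0) :
    u ∈ Submodule.span R (offDiagSingles ι R) := by
  rw [← Finset.univ_sum_single u]
  refine Submodule.sum_mem _ fun ⟨k, l⟩ _ => ?_
  rcases eq_or_ne k l with rfl | hkl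
  · simp [hu]
  · rw [← mul_one (u (k, l)), ← smul_eq_mul, Pi.single_smul']
    exact Submodule.smul_mem _ _ (Submodule.subset_span ⟨k, l, hkl, rfl⟩)

lemma diag_eq_zero_of_mem_span_offDiagSingles {R : Type*} [Semiring R] {u : ι × ι → R}
    (hu : u ∈ Submodule.span R (offDiagSingles ι R)) (a : ι) :
    u (a, a) = 0 := by
  refine (Submodule.span_le (p := LinearMap.ker (LinearMap.proj (a, a))).2 ?_ hu : _)
  rintro _ ⟨k, l, hkl, rfl⟩
  simp only [SetLike.mem_coe, LinearMap.mem_ker, LinearMap.coe_proj, Function.eval,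
    Pi.single_apply, Prod.mk.injEq]
  exact if_neg fun h => hkl (h.1.symm.trans h.2)

variable [Fintype ι] {K : Type*} [Field K]

lemma finrank_span_offDiagSingles :
    Module.finrank K (Submodule.span K (offDiagSingles ι K)) =
      Fintype.card ι ^ 2 - Fintype.card ι := by
  have hrange : offDiagSingles ι K =
      Set.range fun p : (univ : Finset ι).offDiag => (Pi.single (p : ι × ι) 1 : ι × ι → K) := by
    ext u
    simp [offDiagSingles, eq_comm]
  have hli : LinearIndependent K
      fun p : (univ : Finset ι).offDiag => (Pi.single (p : ι × ι) 1 : ι × ι → K) :=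
    (Pi.linearIndependent_single_one (ι × ι) K).comp _ Subtype.val_injective
  rw [hrange, finrank_span_eq_card hli, Fintype.card_coe, offDiag_card, card_univ, sq]

lemma finrank_span_offDiagSingles_sup_span_singleton {D : ι × ι → K} {a : ι}
    (ha : D (a, a) ≠ 0) :
    Module.finrank K
        (Submodule.span K (offDiagSingles ι K) ⊔ (K ∙ D) :
          Submodule K (ι × ι → K)) =
      Fintype.card ι ^ 2 - Fintype.card ι + 1 := by
  have hD : D ≠ 0 := fun h => ha (by simp [h])
  have hdisj := (Submodule.disjoint_span_singleton' hD).2 fun h =>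
    ha (diag_eq_zero_of_mem_span_offDiagSingles h a)
  have h := Submodule.finrank_sup_add_finrank_inf_eq
    (Submodule.span K (offDiagSingles ι K)) (K ∙ D)
  rwa [hdisj.eq_bot, finrank_bot, add_zero, finrank_span_singleton hD,
    finrank_span_offDiagSingles] at h

end OffDiagonal

/-- For `ψ ∈ ℂⁿ` with all entries nonzero, the span in `ℂⁿ ⊗ ℂⁿ` (realized as
`Fin n × Fin n → ℂ` via `x ⊗ y = {(k,l) ↦ x k * y l}`) of the vectors
`ψ_θ ⊗ conj(ψ_θ)` over all phase vectors `θ ∈ ℝⁿ` equals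
`span{e_k ⊗ e_l : k ≠ l} ⊕ ℂ·(∑ k |ψ_k|² e_k ⊗ e_k)` and has dimension `n² - n + 1`. -/
theorem span_random_phases (n : ℕ) (hn : 1 ≤ n) (ψ : Fin n → ℂ)
    (hψ : ∀ k, ψ k ≠ 0)
    (v : (Fin n → ℝ) → (Fin n × Fin n → ℂ))
    (hv : ∀ θ, v θ = fun p =>
      (Complex.exp (θ p.1 * Complex.I) * ψ p.1) *
        star (Complex.exp (θ p.2 * Complex.I) * ψ p.2))
    (D : Fin n × Fin n → ℂ)
    (hD : D = fun p => if p.1 = p.2 then ((‖ψ p.1‖ ^ 2 : ℝ) : ℂ) else 0) :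
    Submodule.span ℂ (Set.range v) =
        Submodule.span ℂ
          {u : Fin n × Fin n → ℂ | ∃ k l : Fin n, k ≠ l ∧ u = Pi.single (k, l) (1 : ℂ)}
          ⊔ (ℂ ∙ D) ∧
      Module.finrank ℂ (Submodule.span ℂ (Set.range v)) = n ^ 2 - n + 1 := by
  set O := Submodule.span ℂ (offDiagSingles (Fin n) ℂ)
  have hv' : v = fun θ => tensorConj (fun k => exp (θ k * I) * ψ k) := funext hv
  have hO : O ≤ Submodule.span ℂ (Set.range v) := by
    rw [Submodule.span_le]
    rintro _ ⟨k, l, hkl, rfl⟩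
    rw [hv']
    exact single_offDiag_mem_span_tensorConj_phaseShift ψ hψ hkl
  have hvD : ∀ θ, v θ - D ∈ O := fun θ =>
    mem_span_offDiagSingles_of_diag_eq_zero fun a => by
      simp [hv', hD, tensorConj_apply_self, norm_exp_ofReal_mul_I]
  have hspan : Submodule.span ℂ (Set.range v) = O ⊔ (ℂ ∙ D) := by
    refine le_antisymm ?_ (sup_le hO ?_)
    · rw [Submodule.span_le]
      rintro _ ⟨θ, rfl⟩
      rw [← sub_add_cancel (v θ) D]
      exact add_mem (Submodule.mem_sup_left (hvD θ))
        (Submodule.mem_sup_right (Submodule.mem_span_singleton_self D))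
    · rw [Submodule.span_singleton_le_iff_mem, ← sub_sub_cancel (v 0) D]
      exact sub_mem (Submodule.subset_span ⟨0, rfl⟩) (hO (hvD 0))
  refine ⟨hspan, ?_⟩
  have hD0 : D (⟨0, hn⟩, ⟨0, hn⟩) ≠ 0 := by simp [hD, hψ]
  rw [hspan, finrank_span_offDiagSingles_sup_span_singleton hD0, Fintype.card_fin]
end
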